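/- (Sub-potential lower bound from two-sided kernel estimates.) Let N ≥ 1, C ≥ 1, T > 0. Let Γ(x, t; y, s) be defined for x, y ∈ ℝ^N and 0 ≤ s < t < T, measurable, and satisfying the two-sided Gaussian bounds (1/C)·(t − s)^{−N/2}·exp(−C‖x − y‖²/(t − s)) ≤ Γ(x, t; y, s) ≤ C·(t − s)^{−N/2}·exp(−(1/C)‖x − y‖²/(t − s)). Let u : ℝ^N × [0, T) → [0, ∞) be measurable and satisfy the representation formula u(x, t) = ∫_{ℝ^N} Γ(x, t; ξ, τ)·u(ξ, τ) dξ for all 0 ≤ τ < t < T and x ∈ ℝ^N (the integrals being finite). Then there exists a constant C' > 1, depending only on N and C, such that u(x, t) ≥ (1/C')·u(y, s)·(s/t)^{N/2}·exp(−C'‖x − y‖²/(t − s)) for all x, y ∈ ℝ^N and all 0 < s < t < T. -/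

import Mathlib

open MeasureTheory Real

/-!
Compare both values through an intermediate time `τ < s`. Writing `u(x,t)` and `u(y,s)` as
integrals against `u(·,τ)`, it suffices to show `K Γ(y,s;ξ,τ) ≤ Γ(x,t;ξ,τ)` pointwise in `ξ`
for `K = (1/C') (s/t)^{N/2} exp(-C'‖x-y‖²/(t-s))`, then integrate against `u(·,τ) ≥ 0`.
With `s - τ = s(t-s)/(2C²t)`, the Gaussian decay of the upper bound for `Γ(y,s;·,τ)` in
`‖y-ξ‖` beats that of the lower bound for `Γ(x,t;·,τ)`, after splitting
`‖x-ξ‖² ≤ 2‖x-y‖² + 2‖y-ξ‖²`; and `(s-τ)/(t-τ) ≥ s/(4C²t)` bounds the ratio of the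
prefactors `(s-τ)^{-N/2}` and `(t-τ)^{-N/2}`.
-/

lemma const_mul_integral_le_of_kernel_le {α : Type*} [MeasurableSpace α] {μ : Measure α}
    {f g w : α → ℝ} {K : ℝ} (hf : Integrable (fun ξ => f ξ * w ξ) μ)
    (hg : Integrable (fun ξ => g ξ * w ξ) μ) (hw : ∀ ξ, 0 ≤ w ξ) (hfg : ∀ ξ, K * f ξ ≤ g ξ) :
    K * ∫ ξ, f ξ * w ξ ∂μ ≤ ∫ ξ, g ξ * w ξ ∂μ := by
  rw [← integral_const_mul]
  refine integral_mono (hf.const_mul K) hg fun ξ => ?_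
  simpa only [mul_assoc] using mul_le_mul_of_nonneg_right (hfg ξ) (hw ξ)

lemma exists_intermediate_time {C s t : ℝ} (hC : 1 ≤ C) (hs : 0 < s) (hst : s < t) :
    ∃ τ, 0 ≤ τ ∧ τ < s ∧ 2 * C ^ 2 * (s - τ) ≤ t - s ∧
      s / t * (t - τ) ≤ 4 * C ^ 2 * (s - τ) := by
  have ht : 0 < t := hs.trans hst
  have hts : 0 < t - s := sub_pos.2 hst
  have hC2 : 1 ≤ C ^ 2 := one_le_pow₀ hC
  set b := s * (t - s) / (2 * C ^ 2 * t) with hb_def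
  have hb : 2 * C ^ 2 * t * b = s * (t - s) := by rw [hb_def]; field_simp
  have hb_pos : 0 < b := by positivity
  have hb_gap : 2 * C ^ 2 * b ≤ t - s := by
    refine le_of_mul_le_mul_left ?_ ht
    nlinarith [mul_le_mul_of_nonneg_left hst.le hts.le]
  have hb_le : b ≤ t - s := by nlinarith
  have hb_le_s : b ≤ s := by
    refine le_of_mul_le_mul_left ?_ (by positivity : 0 < 2 * C ^ 2 * t)
    rw [hb]
    nlinarith [mul_le_mul_of_nonneg_left hC2 (mul_pos hs ht).le]
  refine ⟨s - b, by linarith, by linarith, by rwa [sub_sub_cancel], ?_⟩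
  rw [sub_sub_cancel, div_mul_eq_mul_div, div_le_iff₀ ht]
  nlinarith [mul_le_mul_of_nonneg_left hb_le hs.le]

lemma rpow_mul_rpow_neg_le {κ c a b e : ℝ} (hκ : 0 ≤ κ) (hc : 0 ≤ c) (ha : 0 < a) (hb : 0 < b)
    (he : 0 ≤ e) (h : κ * a ≤ c * b) : κ ^ e * b ^ (-e) ≤ c ^ e * a ^ (-e) := by
  have hpow := rpow_le_rpow (by positivity) h he
  rw [mul_rpow hκ ha.le, mul_rpow hc hb.le] at hpow
  rw [rpow_neg ha.le, rpow_neg hb.le, ← div_eq_mul_inv, ← div_eq_mul_inv,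
    div_le_div_iff₀ (by positivity) (by positivity)]
  exact hpow

lemma gaussian_exponent_le {C C' σ a b p q r : ℝ} (hC : 0 < C) (hC' : 2 * C ≤ C') (hσ : 0 < σ)
    (hσa : σ ≤ a) (hb : 0 < b) (hba : 2 * C ^ 2 * b ≤ a) (hr : 0 ≤ r) (hq : 0 ≤ q)
    (hp : p ≤ 2 * r + 2 * q) :
    -C' * r / σ + -(1 / C) * q / b ≤ -C * p / a := by
  have ha : 0 < a := hσ.trans_le hσa
  have hsplit : C * p / a ≤ 2 * C * r / a + 2 * C * q / a := by
    rw [← add_div, div_le_div_iff_of_pos_right ha]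
    nlinarith
  have hr' : 2 * C * r / a ≤ C' * r / σ :=
    div_le_div₀ (mul_nonneg (by linarith) hr) (mul_le_mul_of_nonneg_right hC' hr) hσ hσa
  have hq' : 2 * C * q / a ≤ 1 / C * q / b := by
    rw [div_le_div_iff₀ ha hb]
    calc 2 * C * q * b = 1 / C * q * (2 * C ^ 2 * b) := by field_simp
      _ ≤ 1 / C * q * a := by gcongr
  simp only [neg_mul, neg_div]
  linarith

noncomputable def harnackConstant (C e : ℝ) : ℝ := 2 * C ^ 2 * (4 * C ^ 2) ^ e

lemma one_le_four_mul_sq_rpow {C e : ℝ} (hC : 1 ≤ C) (he : 0 ≤ e) : 1 ≤ (4 * C ^ 2) ^ e :=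
  one_le_rpow (by nlinarith) he

lemma one_lt_harnackConstant {C e : ℝ} (hC : 1 ≤ C) (he : 0 ≤ e) : 1 < harnackConstant C e := by
  have := one_le_four_mul_sq_rpow hC he
  unfold harnackConstant
  nlinarith

lemma gaussian_kernel_comparison {E : Type*} [SeminormedAddCommGroup E] {C e s t τ : ℝ}
    (hC : 1 ≤ C) (he : 0 ≤ e) (hs : 0 < s) (hτs : τ < s) (hst : s < t)
    (hgap : 2 * C ^ 2 * (s - τ) ≤ t - s) (hratio : s / t * (t - τ) ≤ 4 * C ^ 2 * (s - τ))
    (x y ξ : E) :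
    1 / harnackConstant C e * (s / t) ^ e * exp (-harnackConstant C e * ‖x - y‖ ^ 2 / (t - s)) *
        (C * (s - τ) ^ (-e) * exp (-(1 / C) * ‖y - ξ‖ ^ 2 / (s - τ))) ≤
      1 / C * (t - τ) ^ (-e) * exp (-C * ‖x - ξ‖ ^ 2 / (t - τ)) := by
  have hC0 : 0 < C := one_pos.trans_le hC
  have ht : 0 < t := hs.trans hst
  have hb : 0 < s - τ := sub_pos.2 hτs
  have hA : 0 ≤ (t - τ) ^ (-e) := rpow_nonneg (by linarith) _
  have hX := one_le_four_mul_sq_rpow hC he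
  have hC' : 2 * C ≤ harnackConstant C e := by
    unfold harnackConstant
    nlinarith [mul_le_mul_of_nonneg_left hX (sq_nonneg C)]
  have hpow : (s / t) ^ e * (s - τ) ^ (-e) ≤ (4 * C ^ 2) ^ e * (t - τ) ^ (-e) :=
    rpow_mul_rpow_neg_le (by positivity) (by positivity) (by linarith) hb he hratio
  have hnorm : ‖x - ξ‖ ^ 2 ≤ 2 * ‖x - y‖ ^ 2 + 2 * ‖y - ξ‖ ^ 2 := by
    have := pow_le_pow_left₀ (norm_nonneg _) (norm_sub_le_norm_sub_add_norm_sub x y ξ) 2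
    nlinarith [add_sq_le (a := ‖x - y‖) (b := ‖y - ξ‖)]
  have hexp : exp (-harnackConstant C e * ‖x - y‖ ^ 2 / (t - s)) *
      exp (-(1 / C) * ‖y - ξ‖ ^ 2 / (s - τ)) ≤ exp (-C * ‖x - ξ‖ ^ 2 / (t - τ)) := by
    rw [← exp_add, exp_le_exp]
    exact gaussian_exponent_le hC0 hC' (sub_pos.2 hst) (by linarith) hb (by linarith)
      (sq_nonneg _) (sq_nonneg _) hnorm
  have hconst : C / harnackConstant C e * (4 * C ^ 2) ^ e = 1 / (2 * C) := by
    unfold harnackConstant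
    field_simp
  calc _ = C / harnackConstant C e * ((s / t) ^ e * (s - τ) ^ (-e)) *
        (exp (-harnackConstant C e * ‖x - y‖ ^ 2 / (t - s)) *
          exp (-(1 / C) * ‖y - ξ‖ ^ 2 / (s - τ))) := by ring
    _ ≤ C / harnackConstant C e * ((4 * C ^ 2) ^ e * (t - τ) ^ (-e)) *
        exp (-C * ‖x - ξ‖ ^ 2 / (t - τ)) := by
      have : 0 < harnackConstant C e := one_pos.trans (one_lt_harnackConstant hC he)
      gcongr
    _ = 1 / (2 * C) * (t - τ) ^ (-e) * exp (-C * ‖x - ξ‖ ^ 2 / (t - τ)) := by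
      rw [← hconst]; ring
    _ ≤ 1 / C * (t - τ) ^ (-e) * exp (-C * ‖x - ξ‖ ^ 2 / (t - τ)) := by
      gcongr; linarith

theorem subpotential_lower_bound (N : ℕ) (C : ℝ) (hC : 1 ≤ C) :
    ∃ C' : ℝ, 1 < C' ∧
      ∀ T : ℝ, 0 < T →
      ∀ Γ : EuclideanSpace ℝ (Fin N) → ℝ → EuclideanSpace ℝ (Fin N) → ℝ → ℝ,
      ∀ u : EuclideanSpace ℝ (Fin N) → ℝ → ℝ,
        -- measurability of the kernel
        (∀ t s : ℝ, 0 ≤ s → s < t → t < T →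
          Measurable (fun q : EuclideanSpace ℝ (Fin N) × EuclideanSpace ℝ (Fin N) =>
            Γ q.1 t q.2 s)) →
        -- two-sided Gaussian bounds
        (∀ (x y : EuclideanSpace ℝ (Fin N)) (t s : ℝ), 0 ≤ s → s < t → t < T →
          (1 / C) * (t - s) ^ (-(N : ℝ) / 2) * Real.exp (-C * ‖x - y‖ ^ 2 / (t - s)) ≤
              Γ x t y s ∧
            Γ x t y s ≤
              C * (t - s) ^ (-(N : ℝ) / 2) * Real.exp (-(1 / C) * ‖x - y‖ ^ 2 / (t - s))) →
        -- `u` is nonnegative and measurable on each time slice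
        (∀ t : ℝ, 0 ≤ t → t < T → Measurable (fun x => u x t)) →
        (∀ (x : EuclideanSpace ℝ (Fin N)) (t : ℝ), 0 ≤ t → t < T → 0 ≤ u x t) →
        -- representation formula with finite integrals
        (∀ (x : EuclideanSpace ℝ (Fin N)) (τ t : ℝ), 0 ≤ τ → τ < t → t < T →
          Integrable (fun ξ => Γ x t ξ τ * u ξ τ) volume ∧
            u x t = ∫ ξ, Γ x t ξ τ * u ξ τ) →
        -- conclusion: sub-potential lower bound
        ∀ (x y : EuclideanSpace ℝ (Fin N)) (s t : ℝ), 0 < s → s < t → t < T →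
          u x t ≥ (1 / C') * u y s * (s / t) ^ ((N : ℝ) / 2) *
            Real.exp (-C' * ‖x - y‖ ^ 2 / (t - s)) := by
  have he : (0 : ℝ) ≤ N / 2 := by positivity
  refine ⟨harnackConstant C (N / 2), one_lt_harnackConstant hC he, ?_⟩
  intro T _ Γ u _ hΓ _ hu hrep x y s t hs hst htT
  simp only [neg_div] at hΓ
  obtain ⟨τ, hτ0, hτs, hgap, hratio⟩ := exists_intermediate_time hC hs hst
  have hτt : τ < t := hτs.trans hst
  obtain ⟨hint_t, hu_t⟩ := hrep x τ t hτ0 hτt htT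
  obtain ⟨hint_s, hu_s⟩ := hrep y τ s hτ0 hτs (hst.trans htT)
  set K := 1 / harnackConstant C (N / 2) * (s / t) ^ ((N : ℝ) / 2) *
    exp (-harnackConstant C (N / 2) * ‖x - y‖ ^ 2 / (t - s))
  have hK : 0 ≤ K := by
    have := one_lt_harnackConstant hC he
    have := hs.trans hst
    positivity
  have hkernel : ∀ ξ, K * Γ y s ξ τ ≤ Γ x t ξ τ := fun ξ =>
    (mul_le_mul_of_nonneg_left (hΓ y ξ s τ hτ0 hτs (hst.trans htT)).2 hK).trans <|
      (gaussian_kernel_comparison hC he hs hτs hst hgap hratio x y ξ).trans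
        (hΓ x ξ t τ hτ0 hτt htT).1
  calc _ = K * u y s := by ring
    _ ≤ u x t := by
      rw [hu_s, hu_t]
      exact const_mul_integral_le_of_kernel_le hint_s hint_t
        (fun ξ => hu ξ τ hτ0 (hτt.trans htT)) hkernel
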